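/- Let X ∈ ℝ^{n×d} have full column rank with all leverage scores ℓ_i < 1, y ∈ ℝⁿ, w* the full least squares solution. Sample index i with probability p_i = (1/Z)(1-ℓ_i)²/ℓ_i where Z = ∑_j (1-ℓ_j)²/ℓ_j. Then E[‖X w_i⁻ - y‖²] ≤ (1 + d/(n-d)²)·‖X w* - y‖². -/

import Mathlib

open Matrix

section Helpers

variable {m l k : Type*} [Fintype m] [Fintype l] [Fintype k]

private theorem vmv_mulVec' (a : l → ℝ) (b v : m → ℝ) :
    vecMulVec a b *ᵥ v = (b ⬝ᵥ v) • a := by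
  ext i
  simp only [mulVec, vecMulVec_apply, dotProduct, Pi.smul_apply, smul_eq_mul, Finset.sum_mul]
  exact Finset.sum_congr rfl fun _ _ => by ring

private theorem mul_vmv' (M : Matrix l m ℝ) (a : k → ℝ) (b : m → ℝ) :
    M * vecMulVec b a = vecMulVec (M *ᵥ b) a := by
  ext i j
  simp only [mul_apply, vecMulVec_apply, mulVec, dotProduct, Finset.sum_mul]
  exact Finset.sum_congr rfl fun _ _ => by ring

private theorem vmv_mul' (M : Matrix m l ℝ) (a : k → ℝ) (b : m → ℝ) :
    vecMulVec a b * M = vecMulVec a (Mᵀ *ᵥ b) := by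
  ext i j
  simp only [mul_apply, vecMulVec_apply, mulVec, dotProduct, transpose_apply]
  rw [Finset.mul_sum]
  exact Finset.sum_congr rfl fun _ _ => by ring

private theorem smul_vmv' (c : ℝ) (a : l → ℝ) (b : m → ℝ) :
    vecMulVec (c • a) b = c • vecMulVec a b := by
  ext i j
  simp [vecMulVec_apply, mul_assoc]

private theorem symm_dot' (M : Matrix m m ℝ) (hM : Mᵀ = M) (a b : m → ℝ) :
    (M *ᵥ a) ⬝ᵥ b = a ⬝ᵥ (M *ᵥ b) := by
  rw [dotProduct_comm, dotProduct_mulVec, ← mulVec_transpose, hM, dotProduct_comm,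
    dotProduct_mulVec, ← mulVec_transpose, hM, dotProduct_comm]

end Helpers

/-- Throwing out one row sampled with influence probabilities
`p_i ∝ (1-ℓ_i)²/ℓ_i` gives a `(1 + d/(n-d)²)`-approximation in expectation.
`ℓ i` is the `i`-th leverage score (diagonal of the hat matrix),
and `w_i⁻` is the least-squares solution with row `i` removed, given by its
normal equations. -/
theorem expected_leave_one_out (n d : ℕ) (hdn : d < n)
    (X : Matrix (Fin n) (Fin d) ℝ) (y : Fin n → ℝ)
    (hX : IsUnit (Xᵀ * X)) (hrank : X.rank = d) :
    let ℓ : Fin n → ℝ := fun i => (X * (Xᵀ * X)⁻¹ * Xᵀ) i i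
    let Z : ℝ := ∑ j, (1 - ℓ j) ^ 2 / ℓ j
    let p : Fin n → ℝ := fun i => (1 / Z) * ((1 - ℓ i) ^ 2 / ℓ i)
    let wstar : Fin d → ℝ := (Xᵀ * X)⁻¹ *ᵥ (Xᵀ *ᵥ y)
    let wi : Fin n → Fin d → ℝ := fun i =>
      (Xᵀ * X - Matrix.vecMulVec (fun j => X i j) (fun j => X i j))⁻¹ *ᵥ
        (Xᵀ *ᵥ y - y i • fun j => X i j)
    (∀ i, 0 < ℓ i) → (∀ i, ℓ i < 1) →
      ∑ i, p i * ∑ j, (X *ᵥ wi i - y) j ^ 2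
        ≤ (1 + d / ((n : ℝ) - d) ^ 2) * ∑ j, (X *ᵥ wstar - y) j ^ 2 := by
  intro ℓ Z p wstar wi hpos hlt
  have hℓ : ℓ = fun i => (X * (Xᵀ * X)⁻¹ * Xᵀ) i i := rfl
  have hZ : Z = ∑ j, (1 - ℓ j) ^ 2 / ℓ j := rfl
  have hp : p = fun i => (1 / Z) * ((1 - ℓ i) ^ 2 / ℓ i) := rfl
  have hwstar : wstar = (Xᵀ * X)⁻¹ *ᵥ (Xᵀ *ᵥ y) := rfl
  have hwi : wi = fun i =>
      (Xᵀ * X - Matrix.vecMulVec (fun j => X i j) (fun j => X i j))⁻¹ *ᵥ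
        (Xᵀ *ᵥ y - y i • fun j => X i j) := rfl
  -- basic matrix facts
  have hdet : IsUnit (Xᵀ * X).det := ((Matrix.isUnit_iff_isUnit_det _).mp hX)
  have hIA : (Xᵀ * X)⁻¹ * (Xᵀ * X) = 1 := Matrix.nonsing_inv_mul _ hdet
  have hAI : (Xᵀ * X) * (Xᵀ * X)⁻¹ = 1 := Matrix.mul_nonsing_inv _ hdet
  have hAsym : (Xᵀ * X)ᵀ = Xᵀ * X := by rw [transpose_mul, transpose_transpose]
  have hAinvSym : ((Xᵀ * X)⁻¹)ᵀ = (Xᵀ * X)⁻¹ := by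
    rw [Matrix.transpose_nonsing_inv, hAsym]
  -- hat matrix facts
  set H : Matrix (Fin n) (Fin n) ℝ := X * (Xᵀ * X)⁻¹ * Xᵀ with hH
  have hHsym : Hᵀ = H := by
    rw [hH, transpose_mul, transpose_mul, transpose_transpose, hAinvSym, ← Matrix.mul_assoc]
  have hHX : H * X = X := by
    rw [hH, Matrix.mul_assoc (X * (Xᵀ * X)⁻¹) Xᵀ X, Matrix.mul_assoc X, hIA, Matrix.mul_one]
  have hHH : H * H = H := by
    calc H * H = (H * X) * ((Xᵀ * X)⁻¹ * Xᵀ) := by rw [hH]; simp only [Matrix.mul_assoc]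
    _ = H := by rw [hHX, hH, Matrix.mul_assoc]
  -- residual
  set r : Fin n → ℝ := X *ᵥ wstar - y with hr
  have hHy : H *ᵥ y = X *ᵥ wstar := by
    rw [hH, hwstar, mulVec_mulVec, mulVec_mulVec]
  have hHr : H *ᵥ r = 0 := by
    simp [hr, mulVec_sub, hHy, mulVec_mulVec, hHX]
  -- per-index residual formula
  have hkey : ∀ i, ∑ j, (X *ᵥ wi i - y) j ^ 2
      = (∑ j, r j ^ 2) + ((1 - ℓ i)⁻¹ * r i) ^ 2 * ℓ i := by
    intro i
    have hc : (1 : ℝ) - ℓ i ≠ 0 := by have := hlt i; intro h; linarith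
    set x : Fin d → ℝ := fun j => X i j with hx
    set u : Fin d → ℝ := (Xᵀ * X)⁻¹ *ᵥ x with hu
    have hAu : (Xᵀ * X) *ᵥ u = x := by rw [hu, mulVec_mulVec, hAI, one_mulVec]
    have hxu : x ⬝ᵥ u = ℓ i := by
      have : ℓ i = H i i := by rw [hℓ]
      rw [this, hH, Matrix.mul_assoc, mul_apply, hu]
      simp only [dotProduct, mulVec, mul_apply, transpose_apply, hx]
    have hBinv : (Xᵀ * X - vecMulVec x x)⁻¹
        = (Xᵀ * X)⁻¹ + (1 - ℓ i)⁻¹ • vecMulVec u u := by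
      apply Matrix.inv_eq_right_inv
      rw [Matrix.sub_mul, Matrix.mul_add, Matrix.mul_add, Matrix.mul_smul,
        Matrix.mul_smul, hAI, mul_vmv', hAu, vmv_mul', hAinvSym, ← hu, mul_vmv',
        vmv_mulVec', smul_vmv', hxu, smul_smul]
      have hco : (1 - ℓ i)⁻¹ * ℓ i = (1 - ℓ i)⁻¹ - 1 := by
        field_simp
        ring
      rw [hco, sub_smul, one_smul]
      abel
    have hub : u ⬝ᵥ (Xᵀ *ᵥ y) = (X *ᵥ wstar) i := by
      rw [hu, symm_dot' _ hAinvSym, ← hwstar]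
      rfl
    have hwii : wi i = wstar + ((1 - ℓ i)⁻¹ * r i) • u := by
      have h1 : wi i = (Xᵀ * X - vecMulVec x x)⁻¹ *ᵥ (Xᵀ *ᵥ y - y i • x) := by
        rw [hwi]
      rw [h1, hBinv, Matrix.add_mulVec, mulVec_sub, mulVec_smul, ← hu, ← hwstar,
        smul_mulVec, vmv_mulVec', dotProduct_sub, hub, dotProduct_smul,
        dotProduct_comm u x, hxu]
      have hcoef : (1 - ℓ i)⁻¹ * ((X *ᵥ wstar) i - y i * ℓ i) - y i
          = (1 - ℓ i)⁻¹ * r i := by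
        have hri : r i = (X *ᵥ wstar) i - y i := by rw [hr]; rfl
        rw [hri]; field_simp; ring
      rw [smul_eq_mul, smul_smul, ← hcoef, sub_smul]
      abel
    have hres : X *ᵥ wi i - y = r + ((1 - ℓ i)⁻¹ * r i) • (X *ᵥ u) := by
      rw [hwii, mulVec_add, mulVec_smul, hr]; abel
    have hhj : ∀ j, (X *ᵥ u) j = H j i := by
      intro j
      rw [hu, mulVec_mulVec, hH]
      show ((X * (Xᵀ * X)⁻¹) *ᵥ x) j = (X * (Xᵀ * X)⁻¹ * Xᵀ) j i
      rw [mul_apply]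
      simp only [mulVec, dotProduct, transpose_apply, hx]
    have hsymH : ∀ j, H j i = H i j := by
      intro j
      conv_lhs => rw [← hHsym]
      rfl
    have hrh : ∑ j, r j * (X *ᵥ u) j = 0 := by
      have h0 := congrFun hHr i
      simp only [mulVec, dotProduct, Pi.zero_apply] at h0
      calc ∑ j, r j * (X *ᵥ u) j = ∑ j, H i j * r j := by
            refine Finset.sum_congr rfl fun j _ => ?_
            rw [hhj j, hsymH j]; ring
        _ = 0 := h0
    have hhh : ∑ j, ((X *ᵥ u) j) ^ 2 = ℓ i := by
      have h1 : (H * H) i i = ∑ j, H i j * H j i := mul_apply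
      have h2 : ℓ i = H i i := by rw [hℓ]
      rw [h2, ← hHH, h1]
      refine (Finset.sum_congr rfl fun j _ => ?_).symm
      rw [hhj j, sq, hsymH j]
    rw [hres]
    have expand : ∀ j, ((r + ((1 - ℓ i)⁻¹ * r i) • (X *ᵥ u)) j) ^ 2
        = r j ^ 2 + (2 * ((1 - ℓ i)⁻¹ * r i)) * (r j * (X *ᵥ u) j)
          + ((1 - ℓ i)⁻¹ * r i) ^ 2 * ((X *ᵥ u) j ^ 2) := by
      intro j; simp only [Pi.add_apply, Pi.smul_apply, smul_eq_mul]; ring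
    rw [Finset.sum_congr rfl fun j _ => expand j, Finset.sum_add_distrib,
      Finset.sum_add_distrib, ← Finset.mul_sum, ← Finset.mul_sum, hrh, hhh,
      mul_zero, add_zero]
  -- global accounting
  have hn0 : 0 < n := lt_of_le_of_lt (Nat.zero_le d) hdn
  haveI : Nonempty (Fin n) := ⟨⟨0, hn0⟩⟩
  set R : ℝ := ∑ j, r j ^ 2 with hR
  have hRnn : 0 ≤ R := Finset.sum_nonneg fun j _ => sq_nonneg _
  have hterm : ∀ i, 0 < (1 - ℓ i) ^ 2 / ℓ i := fun i =>
    div_pos (pow_pos (by linarith [hlt i]) 2) (hpos i)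
  have hZpos : 0 < Z := by
    rw [hZ]
    exact Finset.sum_pos (fun j _ => hterm j) Finset.univ_nonempty
  have hZ0 : Z ≠ 0 := ne_of_gt hZpos
  have hsum_p : ∑ i, p i = 1 := by
    simp only [hp]
    rw [← Finset.mul_sum, ← hZ]
    field_simp
  have hsum_ℓ : ∑ i, ℓ i = (d : ℝ) := by
    calc ∑ i, ℓ i = Matrix.trace H := by
          rw [hℓ]; simp [Matrix.trace, Matrix.diag]
      _ = Matrix.trace ((Xᵀ * X)⁻¹ * (Xᵀ * X)) := by
          rw [hH, Matrix.mul_assoc, Matrix.trace_mul_comm, Matrix.mul_assoc]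
      _ = (d : ℝ) := by rw [hIA, Matrix.trace_one]; simp
  have hnd : (0 : ℝ) < (n : ℝ) - d := by
    have : (d : ℝ) < n := by exact_mod_cast hdn
    linarith
  have hCS : ((n : ℝ) - d) ^ 2 ≤ Z * d := by
    have key := Finset.sum_mul_sq_le_sq_mul_sq Finset.univ
      (fun i => (1 - ℓ i) / Real.sqrt (ℓ i)) (fun i => Real.sqrt (ℓ i))
    have e1 : ∑ i, ((1 - ℓ i) / Real.sqrt (ℓ i)) * Real.sqrt (ℓ i)
        = ((n : ℝ) - d) := by
      rw [show ∑ i, ((1 - ℓ i) / Real.sqrt (ℓ i)) * Real.sqrt (ℓ i) = ∑ i, (1 - ℓ i) from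
        Finset.sum_congr rfl fun i _ =>
          div_mul_cancel₀ _ (Real.sqrt_ne_zero'.mpr (hpos i))]
      rw [Finset.sum_sub_distrib, hsum_ℓ]
      simp
    have e2 : ∑ i, ((1 - ℓ i) / Real.sqrt (ℓ i)) ^ 2 = Z := by
      rw [hZ]
      exact Finset.sum_congr rfl fun i _ => by
        rw [div_pow, Real.sq_sqrt (hpos i).le]
    have e3 : ∑ i, (Real.sqrt (ℓ i)) ^ 2 = (d : ℝ) := by
      rw [show ∑ i, (Real.sqrt (ℓ i)) ^ 2 = ∑ i, ℓ i from
        Finset.sum_congr rfl fun i _ => Real.sq_sqrt (hpos i).le, hsum_ℓ]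
    rw [e1, e2, e3] at key
    exact key
  have hfrac : 1 / Z ≤ (d : ℝ) / ((n : ℝ) - d) ^ 2 := by
    rw [div_le_div_iff₀ hZpos (pow_pos hnd 2)]
    nlinarith [hCS]
  calc ∑ i, p i * ∑ j, (X *ᵥ wi i - y) j ^ 2
      = ∑ i, (p i * R + (1 / Z) * r i ^ 2) := by
        refine Finset.sum_congr rfl fun i _ => ?_
        rw [hkey i, mul_add]
        congr 1
        have h1 : (1 : ℝ) - ℓ i ≠ 0 := by have := hlt i; intro h; linarith
        have h2 : ℓ i ≠ 0 := ne_of_gt (hpos i)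
        simp only [hp]
        field_simp
    _ = (∑ i, p i) * R + (1 / Z) * ∑ i, r i ^ 2 := by
        rw [Finset.sum_add_distrib, ← Finset.sum_mul]
        simp [Finset.mul_sum]
    _ = (1 + 1 / Z) * R := by rw [hsum_p, ← hR]; ring
    _ ≤ (1 + (d : ℝ) / ((n : ℝ) - d) ^ 2) * R := by
        apply mul_le_mul_of_nonneg_right _ hRnn
        linarith [hfrac]
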